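/- arXiv:2411.19174 — 3 statements merged into one kernel-verified Lean document; each statement's English description precedes it below -/
import Mathlib

section
/- Let f : X → R be continuous and convex on a compact convex set X ⊆ R^n, let A ∈ R^{m×n}, and let b : U → R^m be affine on a compact interval-shaped set U ⊆ R^p. Assume F(u) = {x ∈ X : A x ≤ b(u)} is nonempty for all u ∈ U. Then the optimal value function φ : U → R, φ(u) = min_{x ∈ F(u)} f(x), is continuous on U. -/
/-!
The value function `φ` is lower semicontinuous for any feasible-set map with closed graph inside
a compact `X`: its sublevel sets are projections of closed subsets of `U × X` along the compact
factor. Joint convexity of the linear constraints in `(u, x)` and convexity of `f` make `φ` convex,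
and a convex function bounded above by `M` is upper semicontinuous wherever its domain is locally a
cone, as a box is at each of its points: writing `v = (1 - t) • u + t • w` with `w` still in the
box gives `φ v ≤ φ u + t * (M - φ u)`.
-/

open Set Filter Topology Matrix

section ValueFunction

variable {P E : Type*} {F : P → Set E} {f : E → ℝ} {X : Set E} {s : Set P}

lemma IsMinOn.sInf_image_eq {K : Set E} {x : E} (hmin : IsMinOn f K x) (hx : x ∈ K) :
    sInf (f '' K) = f x :=
  IsLeast.csInf_eq ⟨mem_image_of_mem f hx, forall_mem_image.2 (isMinOn_iff.1 hmin)⟩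

lemma convexOn_sInf_image [AddCommGroup P] [Module ℝ P] [AddCommGroup E] [Module ℝ E]
    (hs : Convex ℝ s) (hf : ConvexOn ℝ X f) (hFX : ∀ v, F v ⊆ X)
    (hgraph : Convex ℝ {q : P × E | q.2 ∈ F q.1})
    (hmin : ∀ v ∈ s, ∃ x ∈ F v, IsMinOn f (F v) x) :
    ConvexOn ℝ s fun v => sInf (f '' F v) := by
  refine ⟨hs, fun u hu w hw a b ha hb hab => ?_⟩
  obtain ⟨x, hx, hxmin⟩ := hmin u hu
  obtain ⟨y, hy, hymin⟩ := hmin w hw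
  obtain ⟨z, hz, hzmin⟩ := hmin _ (hs hu hw ha hb hab)
  have hxy : a • x + b • y ∈ F (a • u + b • w) :=
    hgraph (x := (u, x)) (y := (w, y)) hx hy ha hb hab
  simp only [smul_eq_mul, hxmin.sInf_image_eq hx, hymin.sInf_image_eq hy,
    hzmin.sInf_image_eq hz]
  calc f z ≤ f (a • x + b • y) := isMinOn_iff.1 hzmin _ hxy
    _ ≤ a * f x + b * f y := hf.2 (hFX u hx) (hFX w hy) ha hb hab

variable [TopologicalSpace P] [TopologicalSpace E]

lemma isCompact_of_isClosed_graph (hX : IsCompact X) (hFX : ∀ v, F v ⊆ X)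
    (hgraph : IsClosed {q : P × E | q.2 ∈ F q.1}) (v : P) : IsCompact (F v) :=
  hX.of_isClosed_subset (hgraph.preimage (Continuous.prodMk_right v)) (hFX v)

lemma exists_isMinOn_of_isClosed_graph (hX : IsCompact X) (hf : ContinuousOn f X)
    (hFX : ∀ v, F v ⊆ X) (hgraph : IsClosed {q : P × E | q.2 ∈ F q.1}) {v : P}
    (hne : (F v).Nonempty) : ∃ x ∈ F v, IsMinOn f (F v) x :=
  (isCompact_of_isClosed_graph hX hFX hgraph v).exists_isMinOn hne (hf.mono (hFX v))

lemma isClosed_setOf_exists_mem_le (hX : IsCompact X) (hf : ContinuousOn f X)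
    (hFX : ∀ v, F v ⊆ X) (hgraph : IsClosed {q : P × E | q.2 ∈ F q.1}) (y : ℝ) :
    IsClosed {v | ∃ x ∈ F v, f x ≤ y} := by
  have : CompactSpace X := isCompact_iff_compactSpace.1 hX
  have hG : IsClosed {q : P × X | (q.2 : E) ∈ F q.1 ∧ f q.2 ≤ y} :=
    (hgraph.preimage (continuous_fst.prodMk (continuous_subtype_val.comp continuous_snd))).inter
      (isClosed_le (hf.domRestrict.comp continuous_snd) continuous_const)
  convert isClosedMap_fst_of_compactSpace _ hG using 1
  ext v
  simp only [mem_image, Prod.exists, Subtype.exists, exists_and_right, exists_eq_right]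
  exact ⟨fun ⟨x, hx, hxy⟩ => ⟨x, hFX v hx, hx, hxy⟩, fun ⟨x, _, hx, hxy⟩ => ⟨x, hx, hxy⟩⟩

lemma lowerSemicontinuousOn_sInf_image (hX : IsCompact X) (hf : ContinuousOn f X)
    (hFX : ∀ v, F v ⊆ X) (hgraph : IsClosed {q : P × E | q.2 ∈ F q.1})
    (hne : ∀ v ∈ s, (F v).Nonempty) :
    LowerSemicontinuousOn (fun v => sInf (f '' F v)) s := by
  intro u hu y hy
  have hu' : u ∉ {v | ∃ x ∈ F v, f x ≤ y} := fun ⟨x, hx, hxy⟩ =>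
    hy.not_ge ((csInf_le ((hX.bddBelow_image hf).mono (image_mono (hFX u)))
      (mem_image_of_mem f hx)).trans hxy)
  filter_upwards [self_mem_nhdsWithin, nhdsWithin_le_nhds
    ((isClosed_setOf_exists_mem_le hX hf hFX hgraph y).isOpen_compl.mem_nhds hu')]
    with v hv hvy
  obtain ⟨x, hx, hxmin⟩ := exists_isMinOn_of_isClosed_graph hX hf hFX hgraph (hne v hv)
  rw [hxmin.sInf_image_eq hx]
  exact not_le.1 fun hxy => hvy ⟨x, hx, hxy⟩

end ValueFunction

section ConvexUpperSemicontinuity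

variable {E : Type*} [AddCommGroup E] [Module ℝ E] [TopologicalSpace E]

/-- Every homothety with centre `u` and positive ratio `t⁻¹` maps the points of `s` near `u`
into `s`. -/
def IsLocallyConicalAt (s : Set E) (u : E) : Prop :=
  ∀ t : ℝ, 0 < t → ∀ᶠ v in 𝓝[s] u, u + t⁻¹ • (v - u) ∈ s

lemma isLocallyConicalAt_halfSpace (ℓ : E →L[ℝ] ℝ) {β : ℝ} {u : E} (hu : ℓ u ≤ β) :
    IsLocallyConicalAt {v | ℓ v ≤ β} u := by
  intro t ht
  simp only [mem_ofPred_eq, map_add, map_smul, map_sub, smul_eq_mul]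
  rcases hu.eq_or_lt with rfl | hlt
  · filter_upwards [self_mem_nhdsWithin] with v hv
    have : t⁻¹ * (ℓ v - ℓ u) ≤ 0 :=
      mul_nonpos_of_nonneg_of_nonpos (inv_nonneg.2 ht.le) (sub_nonpos.2 hv)
    linarith
  · have hnear : ∀ᶠ v in 𝓝 u, ℓ v < ℓ u + t * (β - ℓ u) :=
      ℓ.continuous.continuousAt.eventually_lt continuousAt_const (by nlinarith)
    filter_upwards [nhdsWithin_le_nhds hnear] with v hv
    have : t⁻¹ * (ℓ v - ℓ u) ≤ β - ℓ u := by rw [inv_mul_le_iff₀ ht]; linarith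
    linarith

lemma ConvexOn.upperSemicontinuousWithinAt_of_isLocallyConicalAt {s : Set E} {g : E → ℝ}
    {u : E} {M : ℝ} (hg : ConvexOn ℝ s g) (hM : ∀ v ∈ s, g v ≤ M) (hu : u ∈ s)
    (hconic : IsLocallyConicalAt s u) : UpperSemicontinuousWithinAt g s u := by
  intro y hy
  have hgu := hM u hu
  set t := (y - g u) / (M - g u + (y - g u)) with ht
  have ht0 : 0 < t := div_pos (by linarith) (by linarith)
  have ht1 : t ≤ 1 := (div_le_one (by linarith)).2 (by linarith)
  have htM : t * (M - g u) < y - g u := by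
    rw [ht, div_mul_eq_mul_div, div_lt_iff₀ (by linarith)]
    nlinarith
  filter_upwards [hconic t ht0] with v hw
  set w := u + t⁻¹ • (v - u)
  have hv : v = (1 - t) • u + t • w := by
    simp only [w, smul_add, smul_smul, mul_inv_cancel₀ ht0.ne', one_smul]
    module
  calc g v ≤ (1 - t) * g u + t * g w := by
        rw [hv]; exact hg.2 hu hw (by linarith) ht0.le (by ring)
    _ ≤ (1 - t) * g u + t * M := by gcongr; exact hM w hw
    _ < y := by linarith

end ConvexUpperSemicontinuity

section Box

variable {ι : Type*} {a c : ι → ℝ}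

lemma isLocallyConicalAt_box [Finite ι] {u : EuclideanSpace ℝ ι}
    (hu : u ∈ {v : EuclideanSpace ℝ ι | ∀ i, v i ∈ Icc (a i) (c i)}) :
    IsLocallyConicalAt {v : EuclideanSpace ℝ ι | ∀ i, v i ∈ Icc (a i) (c i)} u := by
  intro t ht
  set S := {v : EuclideanSpace ℝ ι | ∀ i, v i ∈ Icc (a i) (c i)}
  have hface (ℓ : EuclideanSpace ℝ ι →L[ℝ] ℝ) (β : ℝ) (hℓ : ∀ v ∈ S, ℓ v ≤ β) :
      ∀ᶠ v in 𝓝[S] u, ℓ (u + t⁻¹ • (v - u)) ≤ β :=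
    nhdsWithin_mono _ hℓ (isLocallyConicalAt_halfSpace ℓ (hℓ u hu) t ht)
  filter_upwards [eventually_all.2 fun i =>
    (hface (-EuclideanSpace.proj i) (-a i) fun v hv => neg_le_neg (hv i).1).and
      (hface (EuclideanSpace.proj i) (c i) fun v hv => (hv i).2)] with v hv i
  simpa using hv i

lemma convex_box : Convex ℝ {v : EuclideanSpace ℝ ι | ∀ i, v i ∈ Icc (a i) (c i)} := by
  simp only [ofPred_forall]
  exact convex_iInter fun i =>
    (convex_Icc (a i) (c i)).linear_preimage (EuclideanSpace.proj (𝕜 := ℝ) i).toLinearMap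

end Box

section LinearConstraints

variable {ι κ ρ : Type*} [Fintype ι] [Fintype κ] {X : Set (EuclideanSpace ℝ κ)}
  (A : Matrix ρ κ ℝ) (B : Matrix ρ ι ℝ) (b₀ : ρ → ℝ)

lemma isClosed_setOf_mulVec_le (hX : IsClosed X) :
    IsClosed {q : EuclideanSpace ℝ ι × EuclideanSpace ℝ κ |
      q.2 ∈ X ∧ A *ᵥ q.2.ofLp ≤ B *ᵥ q.1.ofLp + b₀} :=
  (hX.preimage continuous_snd).inter <|
    isClosed_le (f := fun q : EuclideanSpace ℝ ι × EuclideanSpace ℝ κ => A *ᵥ q.2.ofLp)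
      (by fun_prop) (by fun_prop)

lemma convex_setOf_mulVec_le (hX : Convex ℝ X) :
    Convex ℝ {q : EuclideanSpace ℝ ι × EuclideanSpace ℝ κ |
      q.2 ∈ X ∧ A *ᵥ q.2.ofLp ≤ B *ᵥ q.1.ofLp + b₀} := by
  rintro ⟨u, x⟩ ⟨hx, hux⟩ ⟨w, y⟩ ⟨hy, hwy⟩ s t hs ht hst
  refine ⟨hX hx hy hs ht hst, ?_⟩
  simp only [Prod.smul_mk, Prod.mk_add_mk, WithLp.ofLp_add, WithLp.ofLp_smul, mulVec_add,
    mulVec_smul]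
  calc s • A *ᵥ x.ofLp + t • A *ᵥ y.ofLp
      ≤ s • (B *ᵥ u.ofLp + b₀) + t • (B *ᵥ w.ofLp + b₀) := by gcongr
    _ = s • B *ᵥ u.ofLp + t • B *ᵥ w.ofLp + b₀ := by
      linear_combination (norm := module) hst • b₀

end LinearConstraints

/-- Continuity of the optimal value function of the lower-level problem:
with `f` continuous and convex on the compact convex set `X`, `b` affine in `u`,
and `U` an interval-shaped (box) compact uncertainty set on which the feasible
set `F u = {x ∈ X : A x ≤ b u}` is nonempty, the value function
`φ u = min_{x ∈ F u} f x` (written as an infimum) is continuous on `U`. -/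
theorem optimal_value_function_continuous {m n p : ℕ}
    (X : Set (EuclideanSpace ℝ (Fin n))) (hXc : IsCompact X) (hXconv : Convex ℝ X)
    (f : EuclideanSpace ℝ (Fin n) → ℝ) (hfc : ContinuousOn f X)
    (hfconv : ConvexOn ℝ X f)
    (A : Matrix (Fin m) (Fin n) ℝ)
    (a c : Fin p → ℝ)
    (U : Set (EuclideanSpace ℝ (Fin p)))
    (hU : U = {u | ∀ i, u i ∈ Set.Icc (a i) (c i)})
    (B : Matrix (Fin m) (Fin p) ℝ) (b₀ : Fin m → ℝ)
    (b : EuclideanSpace ℝ (Fin p) → Fin m → ℝ)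
    (hb : ∀ u, b u = B.mulVec (fun j => u j) + b₀)
    (F : EuclideanSpace ℝ (Fin p) → Set (EuclideanSpace ℝ (Fin n)))
    (hF : ∀ u, F u = {x ∈ X | ∀ i, A.mulVec (fun j => x j) i ≤ b u i})
    (hne : ∀ u ∈ U, (F u).Nonempty)
    (φ : EuclideanSpace ℝ (Fin p) → ℝ)
    (hφ : ∀ u, φ u = sInf (f '' F u)) :
    ContinuousOn φ U := by
  obtain rfl : φ = fun u => sInf (f '' F u) := funext hφ
  have hgraph : {q : EuclideanSpace ℝ (Fin p) × EuclideanSpace ℝ (Fin n) | q.2 ∈ F q.1} =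
      {q | q.2 ∈ X ∧ A *ᵥ q.2.ofLp ≤ B *ᵥ q.1.ofLp + b₀} := by
    ext q
    simp only [mem_ofPred_eq, hF, hb, Pi.le_def]
  have hFX (v) : F v ⊆ X := fun x hx => (hF v ▸ hx).1
  have hclosed : IsClosed {q : _ × _ | q.2 ∈ F q.1} :=
    hgraph ▸ isClosed_setOf_mulVec_le A B b₀ hXc.isClosed
  have hmin (v) (hv : v ∈ U) : ∃ x ∈ F v, IsMinOn f (F v) x :=
    exists_isMinOn_of_isClosed_graph hXc hfc hFX hclosed (hne v hv)
  obtain ⟨M, hM⟩ := hXc.bddAbove_image hfc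
  have hbdd (v) (hv : v ∈ U) : sInf (f '' F v) ≤ M := by
    obtain ⟨x, hx, hxmin⟩ := hmin v hv
    rw [hxmin.sInf_image_eq hx]
    exact hM (mem_image_of_mem f (hFX v hx))
  have hconv : ConvexOn ℝ U fun v => sInf (f '' F v) :=
    convexOn_sInf_image (hU ▸ convex_box) hfconv hFX
      (hgraph ▸ convex_setOf_mulVec_le A B b₀ hXconv) hmin
  refine continuousOn_iff_lower_upperSemicontinuousOn.2
    ⟨lowerSemicontinuousOn_sInf_image hXc hfc hFX hclosed hne, fun u hu => ?_⟩
  exact hconv.upperSemicontinuousWithinAt_of_isLocallyConicalAt hbdd hu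
    (hU ▸ isLocallyConicalAt_box (hU ▸ hu))
end

section
/- Let P ⊆ R^q be compact and U ⊆ R^p be compact, let r : P × U → R be continuous. Suppose sequences (π^k) ⊆ P and (u^k) ⊆ U satisfy: u^k maximizes r(π^k, ·) over U, and finite sets U_k ⊆ U satisfy U_{k+1} = U_k ∪ {u^k}. Define r_k = max_{u ∈ U_k} r(π^k, u). Then r(π^k, u^k) ≥ r_k for all k, and for every ε > 0 there exists k with r(π^k, u^k) − r_k < ε. -/
/-!
Since `u k` maximizes `r (π k) ·` over all of `U ⊇ D k`, the first claim is immediate. For the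
second, the points `u k` all lie in the compact set `U`, so two of them, `u i` and `u j` with
`i < j`, are `δ`-close; and `u i` has already been added to `D j`. Uniform continuity of `r` on
the compact set `P ×ˢ U` then bounds `r (π j) (u j) - rk j ≤ r (π j) (u j) - r (π j) (u i)`.
-/

open Set

theorem IsCompact.exists_lt_dist_lt {X : Type*} [PseudoMetricSpace X] {U : Set X}
    (hU : IsCompact U) {u : ℕ → X} (hu : ∀ k, u k ∈ U) {δ : ℝ} (hδ : 0 < δ) :
    ∃ i j, i < j ∧ dist (u j) (u i) < δ := by
  obtain ⟨x, -, φ, hφ, hconv⟩ := hU.tendsto_subseq hu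
  obtain ⟨N, hN⟩ := Metric.cauchySeq_iff'.1 hconv.cauchySeq δ hδ
  exact ⟨φ N, φ (N + 1), hφ N.lt_succ_self, hN _ N.le_succ⟩

theorem IsCompact.exists_sub_lt_of_dist_lt_of_continuousOn_prod {X Y : Type*}
    [PseudoMetricSpace X] [PseudoMetricSpace Y] {P : Set X} {U : Set Y}
    (hP : IsCompact P) (hU : IsCompact U) {r : X → Y → ℝ}
    (hr : ContinuousOn (fun x : X × Y => r x.1 x.2) (P ×ˢ U)) {ε : ℝ} (hε : 0 < ε) :
    ∃ δ > 0, ∀ x ∈ P, ∀ v ∈ U, ∀ w ∈ U, dist v w < δ → r x v - r x w < ε := by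
  obtain ⟨δ, hδ, hδε⟩ :=
    Metric.uniformContinuousOn_iff.1 ((hP.prod hU).uniformContinuousOn_of_continuous hr) ε hε
  refine ⟨δ, hδ, fun x hx v hv w hw hvw => ?_⟩
  have hdist : dist (x, v) (x, w) < δ := by simpa [Prod.dist_eq] using hvw
  exact (le_abs_self _).trans_lt (hδε (x, v) ⟨hx, hv⟩ (x, w) ⟨hx, hw⟩ hdist)

section Accumulate

variable {α : Type*} {D : ℕ → Set α} {u : ℕ → α}

theorem subset_of_succ_eq_union_singleton {U : Set α} (hD0 : D 0 ⊆ U) (hu : ∀ k, u k ∈ U)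
    (hDsucc : ∀ k, D (k + 1) = D k ∪ {u k}) (k : ℕ) : D k ⊆ U := by
  induction k with
  | zero => exact hD0
  | succ n ih => rw [hDsucc]; exact union_subset ih (singleton_subset_iff.2 (hu n))

theorem mem_of_lt_of_succ_eq_union_singleton (hDsucc : ∀ k, D (k + 1) = D k ∪ {u k})
    {i j : ℕ} (hij : i < j) : u i ∈ D j := by
  have hmono : Monotone D :=
    monotone_nat_of_le_succ fun n => (hDsucc n).symm ▸ subset_union_left
  exact hmono hij ((hDsucc i).symm ▸ mem_union_right _ rfl)

end Accumulate

theorem max_regret_gap_vanishes_general {q p : ℕ}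
    (P : Set (EuclideanSpace ℝ (Fin q))) (hPc : IsCompact P)
    (U : Set (EuclideanSpace ℝ (Fin p))) (hUc : IsCompact U)
    (r : EuclideanSpace ℝ (Fin q) → EuclideanSpace ℝ (Fin p) → ℝ)
    (hr : ContinuousOn (fun x : EuclideanSpace ℝ (Fin q) × EuclideanSpace ℝ (Fin p) =>
      r x.1 x.2) (P ×ˢ U))
    (π : ℕ → EuclideanSpace ℝ (Fin q)) (hπ : ∀ k, π k ∈ P)
    (u : ℕ → EuclideanSpace ℝ (Fin p)) (hu : ∀ k, u k ∈ U)
    (hmax : ∀ k, ∀ v ∈ U, r (π k) v ≤ r (π k) (u k))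
    (D : ℕ → Set (EuclideanSpace ℝ (Fin p)))
    (hD0 : D 0 ⊆ U)
    (hDsucc : ∀ k, D (k + 1) = D k ∪ {u k})
    (rk : ℕ → ℝ) (hrk : ∀ k, IsGreatest (r (π k) '' D k) (rk k)) :
    (∀ k, rk k ≤ r (π k) (u k)) ∧ ∀ ε > 0, ∃ k, r (π k) (u k) - rk k < ε := by
  have hDU := subset_of_succ_eq_union_singleton hD0 hu hDsucc
  refine ⟨fun k => ?_, fun ε hε => ?_⟩
  · obtain ⟨⟨v, hvD, hv⟩, -⟩ := hrk k
    exact hv ▸ hmax k v (hDU k hvD)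
  · obtain ⟨δ, hδ, hδε⟩ := hPc.exists_sub_lt_of_dist_lt_of_continuousOn_prod hUc hr hε
    obtain ⟨i, j, hij, hdist⟩ := hUc.exists_lt_dist_lt hu hδ
    have hmem : u i ∈ D j := mem_of_lt_of_succ_eq_union_singleton hDsucc hij
    have hle : r (π j) (u i) ≤ rk j := (hrk j).2 ⟨u i, hmem, rfl⟩
    have hgap := hδε (π j) (hπ j) (u j) (hu j) (u i) (hDU j hmem) hdist
    exact ⟨j, by linarith⟩

/-- In the adaptive max-regret loop, the max-regret of the iterate over the full
uncertainty set always dominates the discretized max-regret, and the gap between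
the two becomes smaller than any `ε > 0` at some iteration. -/
theorem max_regret_gap_vanishes {q p : ℕ}
    (P : Set (EuclideanSpace ℝ (Fin q))) (hPc : IsCompact P) (hPne : P.Nonempty)
    (U : Set (EuclideanSpace ℝ (Fin p))) (hUc : IsCompact U) (hUne : U.Nonempty)
    (r : EuclideanSpace ℝ (Fin q) → EuclideanSpace ℝ (Fin p) → ℝ)
    (hr : ContinuousOn (fun x : EuclideanSpace ℝ (Fin q) × EuclideanSpace ℝ (Fin p) =>
      r x.1 x.2) (P ×ˢ U))
    (π : ℕ → EuclideanSpace ℝ (Fin q)) (hπ : ∀ k, π k ∈ P)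
    (u : ℕ → EuclideanSpace ℝ (Fin p)) (hu : ∀ k, u k ∈ U)
    (hmax : ∀ k, ∀ v ∈ U, r (π k) v ≤ r (π k) (u k))
    (D : ℕ → Set (EuclideanSpace ℝ (Fin p)))
    (hD0 : D 0 ⊆ U) (hD0fin : (D 0).Finite) (hD0ne : (D 0).Nonempty)
    (hDsucc : ∀ k, D (k + 1) = D k ∪ {u k})
    (rk : ℕ → ℝ) (hrk : ∀ k, IsGreatest (r (π k) '' D k) (rk k)) :
    (∀ k, rk k ≤ r (π k) (u k)) ∧ ∀ ε > 0, ∃ k, r (π k) (u k) - rk k < ε :=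
  max_regret_gap_vanishes_general P hPc U hUc r hr π hπ u hu hmax D hD0 hDsucc rk hrk
end

section
/- In the setting of the previous discretization scheme, if π^k is feasible for the full problem (g(π^k, u) ≤ 0 for all u ∈ U) and u^k maximizes the regret r(π^k, ·) over U, then r^k ≤ r^* ≤ r(π^k, u^k), where r^k = max_{u ∈ U_k} r(π^k, u) and r^* = min_{π ∈ F^*} max_{u ∈ U} r(π, u). Consequently, if the ε-termination criterion r(π^k, u^k) − r^k < ε holds, then |r^* − r^k| < ε. -/
theorem Set.sep_forall_mem_subset_of_subset {α β : Type*} {P : Set α} {C : α → β → Prop}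
    {D U : Set β} (hDU : D ⊆ U) :
    {x ∈ P | ∀ u ∈ U, C x u} ⊆ {x ∈ P | ∀ u ∈ D, C x u} :=
  fun _ hx => ⟨hx.1, fun u hu => hx.2 u (hDU hu)⟩

theorem IsLeast.relaxation_min_le {α β : Type*} [Preorder β] {f g : α → β} {s t : Set α}
    {a : α} {b : β} (hb : IsLeast (g '' s) b) (hmin : ∀ x ∈ t, f a ≤ f x) (hst : s ⊆ t)
    (hfg : ∀ x ∈ s, f x ≤ g x) : f a ≤ b := by
  obtain ⟨x, hxs, rfl⟩ := hb.1
  exact (hmin x (hst hxs)).trans (hfg x hxs)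

theorem sandwich_and_epsilon_termination_general {q p m : ℕ}
    (P : Set (EuclideanSpace ℝ (Fin q)))
    (U : Set (EuclideanSpace ℝ (Fin p)))
    (r : EuclideanSpace ℝ (Fin q) → EuclideanSpace ℝ (Fin p) → ℝ)
    (g : EuclideanSpace ℝ (Fin q) → EuclideanSpace ℝ (Fin p) → Fin m → ℝ)
    (D : Set (EuclideanSpace ℝ (Fin p))) (hDU : D ⊆ U)
    (Fk : Set (EuclideanSpace ℝ (Fin q)))
    (hFk : Fk = {π ∈ P | ∀ u ∈ D, ∀ j, g π u j ≤ 0})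
    (Fstar : Set (EuclideanSpace ℝ (Fin q)))
    (hFstar : Fstar = {π ∈ P | ∀ u ∈ U, ∀ j, g π u j ≤ 0})
    (RD : EuclideanSpace ℝ (Fin q) → ℝ)
    (hRD : ∀ π', IsGreatest (r π' '' D) (RD π'))
    (Rstar : EuclideanSpace ℝ (Fin q) → ℝ)
    (hRstar : ∀ π', IsGreatest (r π' '' U) (Rstar π'))
    (rstar : ℝ) (hrstar : IsLeast (Rstar '' Fstar) rstar)
    (πk : EuclideanSpace ℝ (Fin q))
    (hπkmin : πk ∈ Fk ∧ ∀ π' ∈ Fk, RD πk ≤ RD π')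
    (hπkfeas : ∀ u ∈ U, ∀ j, g πk u j ≤ 0)
    (uk : EuclideanSpace ℝ (Fin p)) (huk : uk ∈ U)
    (hukmax : ∀ v ∈ U, r πk v ≤ r πk uk)
    (rk : ℝ) (hrk : rk = RD πk) (ε : ℝ) :
    rk ≤ rstar ∧ rstar ≤ r πk uk ∧ (r πk uk - rk < ε → |rstar - rk| < ε) := by
  subst hFk hFstar hrk
  have hRstar_πk : Rstar πk = r πk uk :=
    (hRstar πk).unique ⟨Set.mem_image_of_mem _ huk, Set.forall_mem_image.2 hukmax⟩
  have hlower : RD πk ≤ rstar :=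
    hrstar.relaxation_min_le hπkmin.2 (Set.sep_forall_mem_subset_of_subset hDU)
      fun π _ => (hRD π).mono (hRstar π) (Set.image_mono hDU)
  have hupper : rstar ≤ r πk uk :=
    hRstar_πk ▸ hrstar.2 (Set.mem_image_of_mem _ ⟨hπkmin.1.1, hπkfeas⟩)
  exact ⟨hlower, hupper, fun hε => abs_sub_lt_iff.2 ⟨by linarith, by linarith⟩⟩

/-- Sandwich estimate: if the iterate `πk` solving the discretized problem is
feasible for the full problem and `uk` maximizes its regret over `U`, then the
discretized optimal value and the full max-regret sandwich the optimal value
`r*`; consequently the `ε`-termination criterion guarantees `|r* - rk| < ε`. -/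
theorem sandwich_and_epsilon_termination {q p m : ℕ}
    (P : Set (EuclideanSpace ℝ (Fin q)))
    (U : Set (EuclideanSpace ℝ (Fin p)))
    (r : EuclideanSpace ℝ (Fin q) → EuclideanSpace ℝ (Fin p) → ℝ)
    (g : EuclideanSpace ℝ (Fin q) → EuclideanSpace ℝ (Fin p) → Fin m → ℝ)
    (D : Set (EuclideanSpace ℝ (Fin p))) (hDfin : D.Finite) (hDU : D ⊆ U)
    (Fk : Set (EuclideanSpace ℝ (Fin q)))
    (hFk : Fk = {π ∈ P | ∀ u ∈ D, ∀ j, g π u j ≤ 0})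
    (Fstar : Set (EuclideanSpace ℝ (Fin q)))
    (hFstar : Fstar = {π ∈ P | ∀ u ∈ U, ∀ j, g π u j ≤ 0})
    (RD : EuclideanSpace ℝ (Fin q) → ℝ)
    (hRD : ∀ π', IsGreatest (r π' '' D) (RD π'))
    (Rstar : EuclideanSpace ℝ (Fin q) → ℝ)
    (hRstar : ∀ π', IsGreatest (r π' '' U) (Rstar π'))
    (rstar : ℝ) (hrstar : IsLeast (Rstar '' Fstar) rstar)
    (πk : EuclideanSpace ℝ (Fin q))
    (hπkmin : πk ∈ Fk ∧ ∀ π' ∈ Fk, RD πk ≤ RD π')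
    (hπkfeas : ∀ u ∈ U, ∀ j, g πk u j ≤ 0)
    (uk : EuclideanSpace ℝ (Fin p)) (huk : uk ∈ U)
    (hukmax : ∀ v ∈ U, r πk v ≤ r πk uk)
    (rk : ℝ) (hrk : rk = RD πk) (ε : ℝ) :
    rk ≤ rstar ∧ rstar ≤ r πk uk ∧ (r πk uk - rk < ε → |rstar - rk| < ε) :=
  sandwich_and_epsilon_termination_general P U r g D hDU Fk hFk Fstar hFstar RD hRD Rstar hRstar
    rstar hrstar πk hπkmin hπkfeas uk huk hukmax rk hrk ε
end
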